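/- Let G = ⟨a⟩₁₂ ⋊ ⟨b⟩ with a of order 12, b² ∈ ⟨a⟩, and a^b = a⁻⁵ = a⁷. If b² = 1 then G ≅ C₃ × D₈, and if b² = a⁶ then G ≅ C₃ × Q₈. -/

import Mathlib

/-!
From `a ^ 12 = 1` and `7 * 4 ≡ 4`, `7 * 3 ≡ -3 (mod 12)`: `c = a⁴` is central with `c³ = 1`,
and `d = a³` satisfies `d⁴ = 1`, `b⁻¹ d b = d⁻¹`. So `(d, b)` satisfies the defining relations of
`D₈` (if `b² = 1`) or of `Q₈` (if `b² = a⁶ = d²`), and with `c` this gives a homomorphism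
`C₃ × D₈ → G` resp. `C₃ × Q₈ → G`. Its image contains `a = c d³` and `b`, so it is onto, hence
bijective since both groups have order 24.
-/

section

variable {G : Type*} [Group G]

lemma pow_mod_eq_pow_of_pow_eq_one {r : G} {n : ℕ} (hr : r ^ n = 1) (k : ℕ) :
    r ^ (k % n) = r ^ k := by
  conv_rhs => rw [← Nat.div_add_mod k n, pow_add, pow_mul, hr, one_pow, one_mul]

lemma inv_mul_pow_mul_eq_pow {r s t : G} (h : s⁻¹ * r * s = t) (k : ℕ) :
    s⁻¹ * r ^ k * s = t ^ k := by
  simpa [← h] using (conj_pow (a := s⁻¹) (b := r) (i := k)).symm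

namespace ZMod

variable {n : ℕ} [NeZero n]

def powersHom (r : G) (hr : r ^ n = 1) : Multiplicative (ZMod n) →* G where
  toFun i := r ^ (Multiplicative.toAdd i).val
  map_one' := by simp
  map_mul' i j := by
    rw [toAdd_mul, ZMod.val_add, pow_mod_eq_pow_of_pow_eq_one hr, pow_add]

lemma powersHom_apply (r : G) (hr : r ^ n = 1) (i : Multiplicative (ZMod n)) :
    powersHom r hr i = r ^ (Multiplicative.toAdd i).val := rfl

lemma powersHom_natCast (r : G) (hr : r ^ n = 1) (k : ℕ) :
    powersHom r hr (Multiplicative.ofAdd (k : ZMod n)) = r ^ k := by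
  rw [powersHom_apply, toAdd_ofAdd, ZMod.val_natCast, pow_mod_eq_pow_of_pow_eq_one hr]

lemma powersHom_mul_eq_mul_inv {r s : G} (hr : r ^ n = 1) (hsr : s⁻¹ * r * s = r⁻¹)
    (i : Multiplicative (ZMod n)) : powersHom r hr i * s = s * (powersHom r hr i)⁻¹ := by
  rw [powersHom_apply, ← inv_pow, ← inv_mul_pow_mul_eq_pow hsr]
  group

end ZMod

namespace DihedralGroup

variable {n : ℕ} [NeZero n]

def lift (x y : G) (hx : x ^ n = 1) (hy : y ^ 2 = 1) (hyx : y⁻¹ * x * y = x⁻¹) :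
    DihedralGroup n →* G where
  toFun
    | .r i => ZMod.powersHom x hx (.ofAdd i)
    | .sr i => y * ZMod.powersHom x hx (.ofAdd i)
  map_one' := map_one (ZMod.powersHom x hx)
  map_mul' := by
    have hφs := ZMod.powersHom_mul_eq_mul_inv hx hyx
    rintro (i | i) (j | j) <;>
      simp only [r_mul_r, r_mul_sr, sr_mul_r, sr_mul_sr, sub_eq_neg_add, ofAdd_add, ofAdd_neg,
        map_mul, map_inv]
    · rw [← mul_assoc _ y, hφs, mul_assoc]
    · rw [mul_assoc]
    · rw [mul_assoc, ← mul_assoc _ y, hφs, ← mul_assoc, ← mul_assoc, ← sq, hy, one_mul]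

variable (x y : G) (hx : x ^ n = 1) (hy : y ^ 2 = 1) (hyx : y⁻¹ * x * y = x⁻¹)

@[simp]
lemma lift_r (i : ZMod n) : lift x y hx hy hyx (r i) = ZMod.powersHom x hx (.ofAdd i) := rfl

@[simp]
lemma lift_sr (i : ZMod n) : lift x y hx hy hyx (sr i) = y * ZMod.powersHom x hx (.ofAdd i) := rfl

end DihedralGroup

namespace QuaternionGroup

variable {n : ℕ} [NeZero n]

def lift (x y : G) (hx : x ^ (2 * n) = 1) (hy : y ^ 2 = x ^ n) (hyx : y⁻¹ * x * y = x⁻¹) :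
    QuaternionGroup n →* G where
  toFun
    | .a i => ZMod.powersHom x hx (.ofAdd i)
    | .xa i => y * ZMod.powersHom x hx (.ofAdd i)
  map_one' := map_one (ZMod.powersHom x hx)
  map_mul' := by
    have hφs := ZMod.powersHom_mul_eq_mul_inv hx hyx
    -- keep `↑n + j - i` as `↑n + (-i + j)`, so that `↑n` can be traded for `y ^ 2`
    rintro (i | i) (j | j) <;>
      simp only [a_mul_a, a_mul_xa, xa_mul_a, xa_mul_xa, add_sub_assoc, sub_eq_neg_add (a := j)] <;>
      simp only [ofAdd_add, ofAdd_neg, map_mul, map_inv]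
    · rw [← mul_assoc _ y, hφs, mul_assoc]
    · rw [mul_assoc]
    · rw [ZMod.powersHom_natCast, ← hy, mul_assoc y, ← mul_assoc _ y, hφs, sq]
      simp only [mul_assoc]

variable (x y : G) (hx : x ^ (2 * n) = 1) (hy : y ^ 2 = x ^ n) (hyx : y⁻¹ * x * y = x⁻¹)

@[simp]
lemma lift_a (i : ZMod (2 * n)) : lift x y hx hy hyx (a i) = ZMod.powersHom x hx (.ofAdd i) := rfl

@[simp]
lemma lift_xa (i : ZMod (2 * n)) :
    lift x y hx hy hyx (xa i) = y * ZMod.powersHom x hx (.ofAdd i) := rfl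

end QuaternionGroup

lemma MonoidHom.nonempty_mulEquiv_of_closure_subset_range {H : Type*} [Group H] [Finite H]
    (f : H →* G) {s : Set G} (hs : Subgroup.closure s = ⊤) (hsf : s ⊆ f.range)
    (hcard : Nat.card H = Nat.card G) : Nonempty (G ≃* H) := by
  have hsurj : Function.Surjective f := by
    rw [← MonoidHom.range_eq_top, eq_top_iff, ← hs, Subgroup.closure_le]
    exact hsf
  exact ⟨(MulEquiv.ofBijective f ((Nat.bijective_iff_surjective_and_card f).2 ⟨hsurj, hcard⟩)).symm⟩

lemma pow_four_mem_center {a b : G} (ha : a ^ 12 = 1) (hab : b⁻¹ * a * b = a ^ 7)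
    (hgen : Subgroup.closure {a, b} = ⊤) : a ^ 4 ∈ Subgroup.center G := by
  rw [Subgroup.center_eq_iInf hgen]
  simp only [Subgroup.mem_iInf, Set.mem_insert_iff, Set.mem_singleton_iff, forall_eq_or_imp,
    forall_eq, Subgroup.mem_centralizer_singleton_iff]
  refine ⟨pow_mul_comm' a 4, ?_⟩
  have hb4 : b⁻¹ * a ^ 4 * b = a ^ 4 := by
    rw [inv_mul_pow_mul_eq_pow hab, ← pow_mul, ← pow_mod_eq_pow_of_pow_eq_one ha]
  simpa [mul_assoc] using congrArg (b * ·) hb4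

lemma nonempty_mulEquiv_zmod_three_prod {a b : G} (ha : a ^ 12 = 1)
    (hab : b⁻¹ * a * b = a ^ 7) (hgen : Subgroup.closure {a, b} = ⊤) (hcard : Nat.card G = 24)
    {H : Type*} [Group H] (hH : Nat.card H = 8) (ψ : H →* G) (ha9 : a ^ 9 ∈ ψ.range)
    (hb : b ∈ ψ.range) : Nonempty (G ≃* Multiplicative (ZMod 3) × H) := by
  have : Finite H := Nat.finite_of_card_ne_zero (by rw [hH]; norm_num)
  have hc : (a ^ 4) ^ 3 = 1 := by rw [← pow_mul, ha]
  let φ := ZMod.powersHom (a ^ 4) hc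
  have hcomm : ∀ m h, Commute (φ m) (ψ h) := fun m h =>
    (show Commute (ψ h) (a ^ 4) from
      Subgroup.mem_center_iff.1 (pow_four_mem_center ha hab hgen) (ψ h)).symm.pow_left _
  refine (φ.noncommCoprod ψ hcomm).nonempty_mulEquiv_of_closure_subset_range hgen ?_ ?_
  · obtain ⟨x, hx⟩ := ha9
    obtain ⟨y, hy⟩ := hb
    refine Set.insert_subset_iff.2 ⟨⟨(.ofAdd ((1 : ℕ) : ZMod 3), x), ?_⟩,
      Set.singleton_subset_iff.2 ⟨(1, y), by simp [hy]⟩⟩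
    rw [MonoidHom.noncommCoprod_apply, ZMod.powersHom_natCast, hx, ← pow_mul, ← pow_add,
      ← pow_mod_eq_pow_of_pow_eq_one ha, pow_one]
  · rw [Nat.card_prod, hH, hcard, Nat.card_eq_fintype_card, Fintype.card_multiplicative, ZMod.card]

end

/-- Let `G = ⟨a⟩₁₂ ⋊ ⟨b⟩` be a group of order 24 with `a` of order 12 and
`a^b = a⁷ = a⁻⁵`. If `b² = 1` then `G ≅ C₃ × D₈`, and if `b² = a⁶` then
`G ≅ C₃ × Q₈`. -/
theorem stmt18 (G : Type*) [Group G] (a b : G)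
    (ha : orderOf a = 12) (hab : b⁻¹ * a * b = a ^ 7)
    (hgen : Subgroup.closure {a, b} = ⊤) (hcard : Nat.card G = 24) :
    (b ^ 2 = 1 → Nonempty (G ≃* Multiplicative (ZMod 3) × DihedralGroup 4)) ∧
    (b ^ 2 = a ^ 6 → Nonempty (G ≃* Multiplicative (ZMod 3) × QuaternionGroup 2)) := by
  have ha12 : a ^ 12 = 1 := ha ▸ pow_orderOf_eq_one a
  have hd : (a ^ 3) ^ 4 = 1 := by rw [← pow_mul, ha12]
  have hdb : b⁻¹ * a ^ 3 * b = (a ^ 3)⁻¹ := by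
    rw [inv_mul_pow_mul_eq_pow hab, eq_inv_iff_mul_eq_one, ← pow_mul, ← pow_add]
    exact (pow_mod_eq_pow_of_pow_eq_one ha12 _).symm.trans (pow_zero a)
  have ha9 : a ^ 9 = (a ^ 3) ^ 3 := by rw [← pow_mul]
  refine ⟨fun hb => ?_, fun hb => ?_⟩
  · refine nonempty_mulEquiv_zmod_three_prod ha12 hab hgen hcard
      DihedralGroup.nat_card (DihedralGroup.lift (a ^ 3) b hd hb hdb)
      ⟨.r ((3 : ℕ) : ZMod 4), ?_⟩ ⟨.sr 0, ?_⟩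
    · rw [DihedralGroup.lift_r, ZMod.powersHom_natCast, ha9]
    · simp
  · refine nonempty_mulEquiv_zmod_three_prod ha12 hab hgen hcard
      (by rw [Nat.card_eq_fintype_card, QuaternionGroup.card])
      (QuaternionGroup.lift (a ^ 3) b hd (by rw [hb, ← pow_mul]) hdb)
      ⟨.a ((3 : ℕ) : ZMod 4), ?_⟩ ⟨.xa 0, ?_⟩
    · rw [QuaternionGroup.lift_a, ZMod.powersHom_natCast, ha9]
    · simp
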